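/- arXiv:2203.02084 — 3 statements merged into one kernel-verified Lean document; each statement's English description precedes it below -/
import Mathlib

section
/- Let A ∈ ℝ^{n×n}, B ∈ ℝ^{n×p}, F ∈ ℝ^{m×m}, G ∈ ℝ^{m×q}, L ∈ ℝ^{q×m}, P ∈ ℝ^{n×m}, Q ∈ ℝ^{p×m} be real matrices satisfying the simulation-relation condition P F = A P + B Q. Suppose x₁ : ℝ → ℝⁿ has derivative A x₁(t) + B u₁(t) + c(t) at time t (concrete dynamics) and x₂ : ℝ → ℝᵐ has derivative (F + G L) x₂(t) + G ū₂(t) at t (transformed abstraction dynamics), where u₁, ū₂, c are given functions. Then the error state x̃ := x₁ − P x₂ has derivative A x̃(t) + B u₁(t) − (B Q + P G L) x₂(t) − P G ū₂(t) + c(t) at t. (This is the joint error-dynamics derivation of the robust approximate simulation framework.) -/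
open Matrix

theorem HasDerivAt.const_mulVec {𝕜 ι κ : Type*} [NontriviallyNormedField 𝕜] [Fintype κ]
    (M : Matrix ι κ 𝕜) {x : 𝕜 → κ → 𝕜} {x' : κ → 𝕜} {t : 𝕜} (hx : HasDerivAt x x' t) :
    HasDerivAt (fun s => M *ᵥ x s) (M *ᵥ x') t :=
  hasDerivAt_pi.2 fun i => by
    simpa only [mulVec, dotProduct] using
      HasDerivAt.fun_sum fun j _ => (hasDerivAt_pi.1 hx j).const_mul (M i j)

theorem mulVec_closedLoop_eq_of_mul_eq {R ι κ μ ν : Type*} [CommRing R]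
    [Fintype ι] [Fintype κ] [Fintype μ] [Fintype ν]
    {A : Matrix ι ι R} {B : Matrix ι μ R} {F : Matrix κ κ R} {G : Matrix κ ν R}
    (L : Matrix ν κ R) {P : Matrix ι κ R} {Q : Matrix μ κ R} (hPF : P * F = A * P + B * Q)
    (x : κ → R) (u : ν → R) :
    P *ᵥ ((F + G * L) *ᵥ x + G *ᵥ u) =
      A *ᵥ (P *ᵥ x) + (B * Q + P * G * L) *ᵥ x + (P * G) *ᵥ u := by
  rw [mulVec_add, mulVec_mulVec, mulVec_mulVec, Matrix.mul_add, hPF, mulVec_mulVec,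
    ← Matrix.mul_assoc, add_mulVec, add_mulVec, add_mulVec]
  abel

/-- Joint error-dynamics derivation of the robust approximate simulation framework:
if `P F = A P + B Q`, the concrete state `x₁` satisfies `ẋ₁ = A x₁ + B u₁ + c` and the
transformed abstraction satisfies `ẋ₂ = (F + G L) x₂ + G ū₂`, then the error state
`x̃ = x₁ - P x₂` satisfies `ẋ̃ = A x̃ + B u₁ - (B Q + P G L) x₂ - P G ū₂ + c`. -/
theorem stmt_1 {n m p q : ℕ}
    (A : Matrix (Fin n) (Fin n) ℝ) (B : Matrix (Fin n) (Fin p) ℝ)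
    (F : Matrix (Fin m) (Fin m) ℝ) (G : Matrix (Fin m) (Fin q) ℝ)
    (L : Matrix (Fin q) (Fin m) ℝ) (P : Matrix (Fin n) (Fin m) ℝ)
    (Q : Matrix (Fin p) (Fin m) ℝ)
    (hPF : P * F = A * P + B * Q)
    (x₁ : ℝ → Fin n → ℝ) (x₂ : ℝ → Fin m → ℝ)
    (u₁ : ℝ → Fin p → ℝ) (ubar₂ : ℝ → Fin q → ℝ) (c : ℝ → Fin n → ℝ) (t : ℝ)
    (hx₁ : HasDerivAt x₁ (A *ᵥ x₁ t + B *ᵥ u₁ t + c t) t)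
    (hx₂ : HasDerivAt x₂ ((F + G * L) *ᵥ x₂ t + G *ᵥ ubar₂ t) t) :
    HasDerivAt (fun s => x₁ s - P *ᵥ x₂ s)
      (A *ᵥ (x₁ t - P *ᵥ x₂ t) + B *ᵥ u₁ t
        - (B * Q + P * G * L) *ᵥ x₂ t - (P * G) *ᵥ ubar₂ t + c t) t := by
  have hPx₂ := hx₂.const_mulVec P
  rw [mulVec_closedLoop_eq_of_mul_eq L hPF] at hPx₂
  refine (hx₁.sub hPx₂).congr_deriv ?_
  rw [mulVec_sub]
  abel
end

section
/- Let A ∈ ℝ^{n×n}, B ∈ ℝ^{n×p}, F ∈ ℝ^{m×m}, G ∈ ℝ^{m×q}, L ∈ ℝ^{q×m}, P ∈ ℝ^{n×m}, Q ∈ ℝ^{p×m}, R ∈ ℝ^{p×q}, K ∈ ℝ^{p×n} be real matrices with P F = A P + B Q. Suppose x₁ : ℝ → ℝⁿ has derivative A x₁(t) + B u₁(t) + c(t) at t, x₂ : ℝ → ℝᵐ has derivative (F + G L) x₂(t) + G ū₂(t) at t, and the input is given by the interface u₁(t) = R ū₂(t) + (Q + R L) x₂(t) + K (x₁(t) − P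 x₂(t)). Then x̃ := x₁ − P x₂ has derivative (A + B K) x̃(t) + (B R − P G)(L x₂(t) + ū₂(t)) + c(t) at t. (Closed-loop error dynamics of the joint system under the interface.) -/
open Matrix

theorem HasDerivAt.matrix_mulVec {ι κ : Type*} [Fintype ι] [Fintype κ] (M : Matrix ι κ ℝ)
    {x : ℝ → κ → ℝ} {x' : κ → ℝ} {t : ℝ} (hx : HasDerivAt x x' t) :
    HasDerivAt (fun s => M *ᵥ x s) (M *ᵥ x') t :=
  (mulVecLin M).toContinuousLinearMap.hasFDerivAt.comp_hasDerivAt t hx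

section ErrorDynamics

variable {S : Type*} [CommRing S] {ι₁ ι₂ ι₃ ι₄ : Type*}
  [Fintype ι₁] [Fintype ι₂] [Fintype ι₃] [Fintype ι₄]

/-- `P F = A P + B Q` says that `P` carries the `x₂`-dynamics into the `x₁`-dynamics driven by
`Q x₂`; this is what lets every remaining `x₂`-term regroup into `x₁ - P x₂` or `L x₂ + u`. -/
theorem closedLoop_error_field_eq
    {A : Matrix ι₁ ι₁ S} {B : Matrix ι₁ ι₃ S} {F : Matrix ι₂ ι₂ S} {G : Matrix ι₂ ι₄ S}
    {L : Matrix ι₄ ι₂ S} {P : Matrix ι₁ ι₂ S} {Q : Matrix ι₃ ι₂ S} {R : Matrix ι₃ ι₄ S}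
    {K : Matrix ι₃ ι₁ S} (hPF : P * F = A * P + B * Q) (x₁ : ι₁ → S) (x₂ : ι₂ → S)
    (u : ι₄ → S) :
    A *ᵥ x₁ + B *ᵥ (R *ᵥ u + (Q + R * L) *ᵥ x₂ + K *ᵥ (x₁ - P *ᵥ x₂))
        - P *ᵥ ((F + G * L) *ᵥ x₂ + G *ᵥ u)
      = (A + B * K) *ᵥ (x₁ - P *ᵥ x₂) + (B * R - P * G) *ᵥ (L *ᵥ x₂ + u) := by
  have hPFx : P *ᵥ (F *ᵥ x₂) = A *ᵥ (P *ᵥ x₂) + B *ᵥ (Q *ᵥ x₂) := by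
    rw [mulVec_mulVec, hPF, add_mulVec, mulVec_mulVec, mulVec_mulVec]
  simp only [add_mulVec, sub_mulVec, mulVec_add, mulVec_sub, ← mulVec_mulVec, hPFx]
  abel

end ErrorDynamics

/-- Closed-loop error dynamics of the joint system under the interface
`u₁ = R ū₂ + (Q + R L) x₂ + K (x₁ - P x₂)`: the error state `x̃ = x₁ - P x₂` satisfies
`ẋ̃ = (A + B K) x̃ + (B R - P G)(L x₂ + ū₂) + c`. -/
theorem stmt_2 {n m p q : ℕ}
    (A : Matrix (Fin n) (Fin n) ℝ) (B : Matrix (Fin n) (Fin p) ℝ)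
    (F : Matrix (Fin m) (Fin m) ℝ) (G : Matrix (Fin m) (Fin q) ℝ)
    (L : Matrix (Fin q) (Fin m) ℝ) (P : Matrix (Fin n) (Fin m) ℝ)
    (Q : Matrix (Fin p) (Fin m) ℝ) (R : Matrix (Fin p) (Fin q) ℝ)
    (K : Matrix (Fin p) (Fin n) ℝ)
    (hPF : P * F = A * P + B * Q)
    (x₁ : ℝ → Fin n → ℝ) (x₂ : ℝ → Fin m → ℝ)
    (u₁ : ℝ → Fin p → ℝ) (ubar₂ : ℝ → Fin q → ℝ) (c : ℝ → Fin n → ℝ) (t : ℝ)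
    (hx₁ : HasDerivAt x₁ (A *ᵥ x₁ t + B *ᵥ u₁ t + c t) t)
    (hx₂ : HasDerivAt x₂ ((F + G * L) *ᵥ x₂ t + G *ᵥ ubar₂ t) t)
    (hu₁ : u₁ t = R *ᵥ ubar₂ t + (Q + R * L) *ᵥ x₂ t + K *ᵥ (x₁ t - P *ᵥ x₂ t)) :
    HasDerivAt (fun s => x₁ s - P *ᵥ x₂ s)
      ((A + B * K) *ᵥ (x₁ t - P *ᵥ x₂ t)
        + (B * R - P * G) *ᵥ (L *ᵥ x₂ t + ubar₂ t) + c t) t := by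
  refine (hx₁.sub (hx₂.matrix_mulVec P)).congr_deriv ?_
  rw [hu₁, ← closedLoop_error_field_eq hPF]
  abel
end

section
/- Let M be a symmetric positive definite N×N real matrix, λ > 0, κ > 0, A an N×N real matrix, E a b×N real matrix, and W a symmetric b×b real matrix with nonnegative entries, such that AᵀM + MA + EᵀWE + λM ⪯ 0. Let ω : ℝ → ℝ^N have derivative A ω(t) + v₁ + v₂ + c at time t for some vectors v₁, v₂, c ∈ ℝ^N, and suppose E ω(t) ≥ 0 entrywise and ω(t) ≠ 0. Then t ↦ V(ω(t)) = (1/κ)√(ω(t)ᵀMω(t)) has a derivative D at t satisfying D ≤ −(λ/2) V(ω(t)) + (1/κ)(√(v₁ᵀMv₁) + √(v₂ᵀMv₂) + √(cᵀMc)). (Per-mode differential inequality for the simulation function in a mode whose cell boundaries cross the origin, as in the proof of Theorem 1.) -/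
/-!
Along the trajectory, `d/dt √(ωᵀMω) = ωᵀMω̇ / √(ωᵀMω)`. Testing the LMI against `ω` gives
`2 ωᵀMAω ≤ -λ ωᵀMω - (Eω)ᵀW(Eω)`, and the last term is nonnegative on the cell `Eω ≥ 0`
because `W ≥ 0` entrywise. The inputs are handled by Cauchy–Schwarz for the inner product
defined by `M`: `ωᵀMv ≤ √(ωᵀMω) √(vᵀMv)`.
-/

open Matrix

variable {n m : Type*} [Fintype n] [Fintype m]

theorem Matrix.IsSymm.dotProduct_mulVec_comm {R : Type*} [CommSemiring R] {M : Matrix n n R}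
    (hM : M.IsSymm) (x y : n → R) : y ⬝ᵥ M *ᵥ x = x ⬝ᵥ M *ᵥ y := by
  rw [dotProduct_mulVec, dotProduct_comm, ← mulVec_transpose, hM.eq]

theorem Matrix.PosSemidef.dotProduct_mulVec_le_sqrt_mul_sqrt [DecidableEq n] {M : Matrix n n ℝ}
    (hM : M.PosSemidef) (x y : n → ℝ) :
    x ⬝ᵥ M *ᵥ y ≤ √(x ⬝ᵥ M *ᵥ x) * √(y ⬝ᵥ M *ᵥ y) := by
  have hnonneg (z : n → ℝ) : 0 ≤ z ⬝ᵥ M *ᵥ z := by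
    simpa using hM.dotProduct_mulVec_nonneg z
  have hcs : (x ⬝ᵥ M *ᵥ y) * (y ⬝ᵥ M *ᵥ x) ≤ (x ⬝ᵥ M *ᵥ x) * (y ⬝ᵥ M *ᵥ y) := by
    simpa only [toBilin'_apply'] using
      (toBilin' M).apply_mul_apply_le_of_forall_zero_le (by simpa only [toBilin'_apply']) x y
  rw [(isHermitian_iff_isSymm.mp hM.isHermitian).dotProduct_mulVec_comm x y, ← sq] at hcs
  rw [← Real.sqrt_mul (hnonneg x)]
  exact (le_abs_self _).trans (Real.abs_le_sqrt hcs)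

theorem Matrix.dotProduct_mulVec_nonneg_of_nonneg {R : Type*} [Semiring R] [PartialOrder R]
    [IsOrderedRing R] {W : Matrix m n R} (hW : ∀ i j, 0 ≤ W i j) {x : m → R} {y : n → R}
    (hx : 0 ≤ x) (hy : 0 ≤ y) : 0 ≤ x ⬝ᵥ W *ᵥ y :=
  dotProduct_nonneg_of_nonneg hx fun i => dotProduct_nonneg_of_nonneg (hW i) hy

theorem Matrix.two_mul_dotProduct_mulVec_mulVec_le_of_posSemidef_neg
    {A M : Matrix n n ℝ} {E : Matrix m n ℝ} {W : Matrix m m ℝ} {lam : ℝ} (hM : M.IsSymm)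
    (hW : ∀ i j, 0 ≤ W i j) (hLMI : (-(Aᵀ * M + M * A + Eᵀ * W * E + lam • M)).PosSemidef)
    {x : n → ℝ} (hx : 0 ≤ E *ᵥ x) :
    2 * (x ⬝ᵥ M *ᵥ (A *ᵥ x)) ≤ -lam * (x ⬝ᵥ M *ᵥ x) := by
  have hform := hLMI.dotProduct_mulVec_nonneg x
  simp only [neg_mulVec, dotProduct_neg, add_mulVec, dotProduct_add, smul_mulVec,
    dotProduct_smul, smul_eq_mul, star_trivial, ← mulVec_mulVec] at hform
  rw [dotProduct_mulVec x Aᵀ, vecMul_transpose, hM.dotProduct_mulVec_comm,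
    dotProduct_mulVec x Eᵀ, vecMul_transpose] at hform
  linarith [dotProduct_mulVec_nonneg_of_nonneg hW hx hx]

variable {𝕜 : Type*} [NontriviallyNormedField 𝕜]

theorem HasDerivAt.dotProduct {u v : 𝕜 → n → 𝕜} {u' v' : n → 𝕜} {t : 𝕜}
    (hu : HasDerivAt u u' t) (hv : HasDerivAt v v' t) :
    HasDerivAt (fun s => u s ⬝ᵥ v s) (u' ⬝ᵥ v t + u t ⬝ᵥ v') t := by
  have := HasDerivAt.fun_sum (u := Finset.univ) fun i _ =>
    (hasDerivAt_pi.mp hu i).fun_mul (hasDerivAt_pi.mp hv i)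
  simpa only [_root_.dotProduct, Finset.sum_add_distrib] using this

omit [Fintype m] in
theorem HasDerivAt.matrix_mulVec_s7 {u : 𝕜 → n → 𝕜} {u' : n → 𝕜} {t : 𝕜} (M : Matrix m n 𝕜)
    (hu : HasDerivAt u u' t) : HasDerivAt (fun s => M *ᵥ u s) (M *ᵥ u') t :=
  hasDerivAt_pi.2 fun i => by simpa [mulVec] using (hasDerivAt_const t (M i)).dotProduct hu

theorem HasDerivAt.dotProduct_mulVec_self {u : 𝕜 → n → 𝕜} {u' : n → 𝕜} {t : 𝕜}
    {M : Matrix n n 𝕜} (hM : M.IsSymm) (hu : HasDerivAt u u' t) :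
    HasDerivAt (fun s => u s ⬝ᵥ M *ᵥ u s) (2 * (u t ⬝ᵥ M *ᵥ u')) t := by
  convert hu.dotProduct (hu.matrix_mulVec_s7 M) using 1
  rw [hM.dotProduct_mulVec_comm, two_mul]

theorem HasDerivAt.sqrt_dotProduct_mulVec_self {u : ℝ → n → ℝ} {u' : n → ℝ} {t : ℝ}
    {M : Matrix n n ℝ} (hM : M.IsSymm) (hu : HasDerivAt u u' t) (hq : u t ⬝ᵥ M *ᵥ u t ≠ 0) :
    HasDerivAt (fun s => √(u s ⬝ᵥ M *ᵥ u s)) ((u t ⬝ᵥ M *ᵥ u') / √(u t ⬝ᵥ M *ᵥ u t)) t := by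
  convert (hu.dotProduct_mulVec_self hM).sqrt hq using 1
  rw [mul_div_mul_left _ _ two_ne_zero]

theorem stmt_7_general {N b : ℕ} (M : Matrix (Fin N) (Fin N) ℝ) (hM : M.PosDef)
    (lam κ : ℝ) (hκ : 0 < κ)
    (A : Matrix (Fin N) (Fin N) ℝ) (E : Matrix (Fin b) (Fin N) ℝ)
    (W : Matrix (Fin b) (Fin b) ℝ) (hWpos : ∀ i j, 0 ≤ W i j)
    (hLMI : (-(Aᵀ * M + M * A + Eᵀ * W * E + lam • M)).PosSemidef)
    (ω : ℝ → Fin N → ℝ) (v₁ v₂ c : Fin N → ℝ) (t : ℝ)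
    (hω : HasDerivAt ω (A *ᵥ ω t + v₁ + v₂ + c) t)
    (hE : ∀ i, 0 ≤ (E *ᵥ ω t) i) (hne : ω t ≠ 0) :
    ∃ D : ℝ, HasDerivAt (fun s => (1 / κ) * Real.sqrt (ω s ⬝ᵥ M *ᵥ ω s)) D t ∧
      D ≤ -(lam / 2) * ((1 / κ) * Real.sqrt (ω t ⬝ᵥ M *ᵥ ω t))
        + (1 / κ) * (Real.sqrt (v₁ ⬝ᵥ M *ᵥ v₁) + Real.sqrt (v₂ ⬝ᵥ M *ᵥ v₂)
          + Real.sqrt (c ⬝ᵥ M *ᵥ c)) := by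
  have hMs : M.IsSymm := isHermitian_iff_isSymm.mp hM.isHermitian
  have hq : 0 < ω t ⬝ᵥ M *ᵥ ω t := by simpa using hM.dotProduct_mulVec_pos hne
  have hr : 0 < √(ω t ⬝ᵥ M *ᵥ ω t) := Real.sqrt_pos.mpr hq
  refine ⟨_, (hω.sqrt_dotProduct_mulVec_self hMs hq.ne').const_mul (1 / κ), ?_⟩
  have hdecay := two_mul_dotProduct_mulVec_mulVec_le_of_posSemidef_neg hMs hWpos hLMI hE
  have hcs := hM.posSemidef.dotProduct_mulVec_le_sqrt_mul_sqrt (ω t)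
  have hbound : (ω t ⬝ᵥ M *ᵥ (A *ᵥ ω t + v₁ + v₂ + c)) / √(ω t ⬝ᵥ M *ᵥ ω t)
      ≤ -(lam / 2) * √(ω t ⬝ᵥ M *ᵥ ω t)
        + (√(v₁ ⬝ᵥ M *ᵥ v₁) + √(v₂ ⬝ᵥ M *ᵥ v₂) + √(c ⬝ᵥ M *ᵥ c)) := by
    rw [div_le_iff₀ hr]
    rw [← Real.mul_self_sqrt hq.le] at hdecay
    simp only [mulVec_add, dotProduct_add]
    linarith [hcs v₁, hcs v₂, hcs c]
  calc _ ≤ (1 / κ) * (-(lam / 2) * √(ω t ⬝ᵥ M *ᵥ ω t)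
        + (√(v₁ ⬝ᵥ M *ᵥ v₁) + √(v₂ ⬝ᵥ M *ᵥ v₂) + √(c ⬝ᵥ M *ᵥ c))) := by gcongr
    _ = _ := by ring

/-- Per-mode differential inequality for the simulation function (mode whose cell
boundaries cross the origin): under the LMI `Aᵀ M + M A + Eᵀ W E + λ M ⪯ 0`, on the
cell `E ω(t) ≥ 0` and with `ω̇ = A ω + v₁ + v₂ + c`, the simulation function
`V(ω) = (1/κ)√(ωᵀ M ω)` has a derivative `D` at `t` with
`D ≤ -(λ/2) V(ω(t)) + (1/κ)(√(v₁ᵀMv₁) + √(v₂ᵀMv₂) + √(cᵀMc))`. -/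
theorem stmt_7 {N b : ℕ} (M : Matrix (Fin N) (Fin N) ℝ) (hM : M.PosDef)
    (lam κ : ℝ) (hlam : 0 < lam) (hκ : 0 < κ)
    (A : Matrix (Fin N) (Fin N) ℝ) (E : Matrix (Fin b) (Fin N) ℝ)
    (W : Matrix (Fin b) (Fin b) ℝ) (hW : W.IsSymm) (hWpos : ∀ i j, 0 ≤ W i j)
    (hLMI : (-(Aᵀ * M + M * A + Eᵀ * W * E + lam • M)).PosSemidef)
    (ω : ℝ → Fin N → ℝ) (v₁ v₂ c : Fin N → ℝ) (t : ℝ)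
    (hω : HasDerivAt ω (A *ᵥ ω t + v₁ + v₂ + c) t)
    (hE : ∀ i, 0 ≤ (E *ᵥ ω t) i) (hne : ω t ≠ 0) :
    ∃ D : ℝ, HasDerivAt (fun s => (1 / κ) * Real.sqrt (ω s ⬝ᵥ M *ᵥ ω s)) D t ∧
      D ≤ -(lam / 2) * ((1 / κ) * Real.sqrt (ω t ⬝ᵥ M *ᵥ ω t))
        + (1 / κ) * (Real.sqrt (v₁ ⬝ᵥ M *ᵥ v₁) + Real.sqrt (v₂ ⬝ᵥ M *ᵥ v₂)
          + Real.sqrt (c ⬝ᵥ M *ᵥ c)) :=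
  stmt_7_general M hM lam κ hκ A E W hWpos hLMI ω v₁ v₂ c t hω hE hne
end
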